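/- arXiv:2601.10486 — 2 statements merged into one kernel-verified Lean document; each statement's English description precedes it below -/
import Mathlib

section
/- (Corollary 5.7, integrated inverse-weight bound) Fix d ≥ 3, β ∈ (0, 1 − 2/d), an integer L ≥ 2, x ∈ Λ, and ξ' ∈ {0,1}. Then ∫_{−L^β/4}^{L^β/4} ds ∫_{Λ*} dk 1/Φ^d(R̃_s^{ξ'}(k), x) ≤ c₆ Π_{j=1}^d ⟨x_j⟩^{1/6}, where c₆ := inf{ c_{β',6} : 0 < β' < 1 − 2/d } and c_{β',6} := 2 + 2^{d(1−β')/2+1}(1 + 2/(πβ'))^d · 2/(d(1−β') − 2). -/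
/-!
For `|s| ≤ L^β/4` every argument `R = |s| |z_{ξ'}(k_j)| ≤ L^β/2` of `Φ` lies in the regime
`γ(R) = 0`, `φ(R) = ⟨R⟩^{1/2}`, where `Φ(R, x₁) ≥ ⟨x₁⟩^{-1/6} ⟨R⟩^{1/2}`. Hence the `k`-average
of `1/Φ^d` is at most `∏ⱼ ⟨xⱼ⟩^{1/6} · A(|s|)^d`, with `A(t) = ∫_{Λ₁*} dk ⟨t |z_{ξ'}(k)|⟩^{-1/2}`.
Since `|z_{ξ'}(m/L)| ≥ 4ν/L` for an integer `0 ≤ ν ≤ L/2` that takes each value at most twice,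
comparing with `∑ ν^{-α}` gives `A ≤ 1` and, for `1 ≤ t ≤ L/4` and `α = (1-b)/2`,
`A(t) ≤ 2^α (1 + 2/(πb)) t^{-α}`. When `b < 1 - 2/d` the power `t^{-dα}` is integrable at
infinity, which yields the bound with the constant `c_{b,6}`; it remains to take the infimum over `b`.
-/

noncomputable section

namespace KWP

open MeasureTheory Classical

/-- regularized absolute value `⟨r⟩ = √(1+r²)` -/
def reg (r : ℝ) : ℝ := Real.sqrt (1 + r^2)

/-- `e^{2πi t}` -/
def eTwoPiI (t : ℝ) : ℂ := Complex.exp (2*Real.pi*Complex.I*(t:ℂ))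

/-- one-dimensional centered periodic lattice of side `L`: representatives in `(-L/2, L/2]` -/
def Lambda1 (L : ℕ) : Finset ℤ :=
  (Finset.Icc (-(L:ℤ)) (L:ℤ)).filter (fun x => -(L:ℤ) < 2*x ∧ 2*x ≤ (L:ℤ))

/-- the lattice `Λ = Λ₁^d` -/
def LambdaSet (L d : ℕ) : Finset (Fin d → ℤ) :=
  Fintype.piFinset (fun _ => Lambda1 L)

/-- centered representative of `z` modulo `L` -/
def cmod (L : ℕ) (z : ℤ) : ℤ :=
  if 2*(z % (L:ℤ)) ≤ (L:ℤ) then z % (L:ℤ) else z % (L:ℤ) - (L:ℤ)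

/-- componentwise centered representative modulo `Λ` -/
def cmodVec (L : ℕ) {d : ℕ} (z : Fin d → ℤ) : Fin d → ℤ := fun i => cmod L (z i)

/-- dual lattice point `m/L ∈ Λ*` associated to `m ∈ Λ` -/
def dpt (L : ℕ) {d : ℕ} (m : Fin d → ℤ) : Fin d → ℝ := fun i => (m i : ℝ) / (L:ℝ)

/-- membership in the dual lattice `Λ*` -/
def memDual (L d : ℕ) (k : Fin d → ℝ) : Prop := ∃ m ∈ LambdaSet L d, k = dpt L m

/-- normalized sum over the dual lattice, `∫_{Λ*} dk f(k)` (ℂ-valued) -/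
def dInt (L d : ℕ) (f : (Fin d → ℝ) → ℂ) : ℂ :=
  ((L:ℂ)^d)⁻¹ * ∑ m ∈ LambdaSet L d, f (dpt L m)

/-- normalized sum over the dual lattice, `∫_{Λ*} dk f(k)` (ℝ-valued) -/
def dIntR (L d : ℕ) (f : (Fin d → ℝ) → ℝ) : ℝ :=
  ((L:ℝ)^d)⁻¹ * ∑ m ∈ LambdaSet L d, f (dpt L m)

/-- `k · y` for `k ∈ ℝ^d`, `y ∈ ℤ^d` -/
def dotIZ {d : ℕ} (k : Fin d → ℝ) (y : Fin d → ℤ) : ℝ := ∑ i, k i * (y i : ℝ)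

def aL (L : ℕ) (β : ℝ) : ℝ := (3/2) * (L:ℝ)^β

def bL (L : ℕ) (β : ℝ) : ℝ := max (2*(L:ℝ)^β) ((L:ℝ)/8)

def gammaFn (L : ℕ) (β : ℝ) (r : ℝ) : ℝ :=
  if |r| ≤ aL L β then 0
  else if bL L β ≤ |r| then 1/3
  else (1/3)*(|r| - aL L β)/(bL L β - aL L β)

def varphiFn (L : ℕ) (β : ℝ) (r : ℝ) : ℝ :=
  if |r| ≤ (L:ℝ)^β then reg r ^ ((1:ℝ)/2)
  else reg ((L:ℝ)^β) ^ ((1:ℝ)/2) / reg (|r| - (L:ℝ)^β) ^ (β/2)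

/-- the one-dimensional weight `Φ` -/
def Phi (L : ℕ) (β : ℝ) (R₁ : ℝ) (x₁ : ℤ) : ℝ :=
  reg (x₁:ℝ) ^ ((1:ℝ)/3 - gammaFn L β R₁) * max 1 (varphiFn L β R₁ / reg (x₁:ℝ) ^ ((1:ℝ)/2))

/-- the weight `Φ^d(R,x) = Π_j Φ(R_j,x_j)` -/
def Phid (L d : ℕ) (β : ℝ) (R : Fin d → ℝ) (x : Fin d → ℤ) : ℝ := ∏ i, Phi L β (R i) (x i)

/-- `z₀(k) = 1 - e^{-2πik}`, `z₁(k) = 1 + e^{-2πik}` -/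
def zfn (ξ : ℕ) (k : ℝ) : ℂ :=
  if ξ = 0 then 1 - Complex.exp (-(2*Real.pi*Complex.I)*(k:ℂ))
  else 1 + Complex.exp (-(2*Real.pi*Complex.I)*(k:ℂ))

/-- `R̃_s^{ξ'}(R,u,k',k)_ℓ = |R_ℓ e^{2πi(u-k')_ℓ} + s z_{ξ'}(k_ℓ)|` -/
def Rtilde (ξ : ℕ) (s : ℝ) {d : ℕ} (R u k' k : Fin d → ℝ) : Fin d → ℝ :=
  fun ℓ => ‖(R ℓ : ℂ) * eTwoPiI (u ℓ - k' ℓ) + (s:ℂ) * zfn ξ (k ℓ)‖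

/-- `R̃_s^{ξ'}(k)_ℓ = |s||z_{ξ'}(k_ℓ)|` -/
def RtildeS (ξ : ℕ) (s : ℝ) {d : ℕ} (k : Fin d → ℝ) : Fin d → ℝ :=
  fun ℓ => |s| * ‖zfn ξ (k ℓ)‖

def c9 (β : ℝ) : ℝ := (2:ℝ)^((7:ℝ)/6) * Real.sqrt 3 * reg ((16:ℝ)^(1/(1-β))/2) ^ ((1:ℝ)/3)

def c7 (d : ℕ) (β : ℝ) : ℝ :=
  (1/4) * (c9 β * Real.sqrt Real.pi * Real.Gamma ((d:ℝ)*(1-β)/4 - 1/2) / Real.Gamma ((d:ℝ)*(1-β)/4))^d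

def c8 (d : ℕ) (β : ℝ) : ℝ :=
  max (2*(d:ℝ)*(c9 β)^d) (2 * c7 d β * ((1 - 1/(d:ℝ))^d)⁻¹)

def c6b (d : ℕ) (β : ℝ) : ℝ :=
  2 + (2:ℝ)^((d:ℝ)*(1-β)/2 + 1) * (1 + 2/(Real.pi*β))^d * (2/((d:ℝ)*(1-β) - 2))

def c6 (d : ℕ) : ℝ := sInf { v : ℝ | ∃ β : ℝ, 0 < β ∧ β < 1 - 2/(d:ℝ) ∧ v = c6b d β }

def c2 (d : ℕ) (β : ℝ) : ℝ := 32 * ((2:ℝ)^((2:ℝ)*(d:ℝ)/3) + 3) * c8 d β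

def c3 (d : ℕ) : ℝ := (2:ℝ)^((d:ℝ)/6) * ((2:ℝ)^((d:ℝ)/6) + 3) * c6 d

def c4 (d : ℕ) (β : ℝ) : ℝ := 32 * ((2:ℝ)^((2:ℝ)*(d:ℝ)/3) + 3) * (c9 β)^d

def c5 (d : ℕ) : ℝ := (2:ℝ)^((d:ℝ)/6) * ((2:ℝ)^((d:ℝ)/6) + 3) * 8

def c1 (d : ℕ) (β : ℝ) : ℝ := max (c2 d β) ((Real.sqrt 3/6) * c3 d)

/-- `L_β(λ,τ₀) = max((4τ₀λ^{-2})^{1/β}, τ₀λ^{-2})` -/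
def Lbeta (β lam τ₀ : ℝ) : ℝ := max ((4*τ₀*(lam^2)⁻¹)^(1/β)) (τ₀*(lam^2)⁻¹)


open Real Finset

lemma sum_comp_le_mul_sum {ι κ R : Type*} [DecidableEq κ] [CommSemiring R] [PartialOrder R]
    [IsOrderedRing R] {s : Finset ι} {t : Finset κ} {g : ι → κ} {f : κ → R} {n : ℕ}
    (hg : ∀ i ∈ s, g i ∈ t) (hf : ∀ k ∈ t, 0 ≤ f k) (hn : ∀ k ∈ t, #{i ∈ s | g i = k} ≤ n) :
    ∑ i ∈ s, f (g i) ≤ n * ∑ k ∈ t, f k := by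
  rw [← Finset.sum_fiberwise_of_maps_to hg, Finset.mul_sum]
  refine Finset.sum_le_sum fun k hk => ?_
  calc ∑ i ∈ s with g i = k, f (g i) = #{i ∈ s | g i = k} * f k := by
        rw [Finset.sum_congr rfl fun i hi => by rw [(Finset.mem_filter.mp hi).2],
          Finset.sum_const, nsmul_eq_mul]
    _ ≤ n * f k := mul_le_mul_of_nonneg_right (Nat.mono_cast (hn k hk)) (hf k hk)

lemma sum_range_add_one_rpow_neg_le (M : ℕ) {α : ℝ} (hα0 : 0 ≤ α) (hα1 : α < 1) :
    ∑ i ∈ range M, ((i:ℝ) + 1) ^ (-α) ≤ (M:ℝ) ^ (1 - α) / (1 - α) := by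
  have hα : 0 < 1 - α := by linarith
  rcases M with _ | N
  · simp [Real.zero_rpow hα.ne']
  have hanti : AntitoneOn (fun x : ℝ => x ^ (-α)) (Set.Icc 1 (1 + N)) := fun a ha b _ hab =>
    Real.rpow_le_rpow_of_nonpos (one_pos.trans_le ha.1) hab (by linarith)
  have hint : ∫ x in (1:ℝ)..1 + N, x ^ (-α) = ((1 + N) ^ (1 - α) - 1) / (1 - α) := by
    rw [integral_rpow (Or.inl (by linarith)), Real.one_rpow, neg_add_eq_sub]
  have htail : ∑ i ∈ range N, ((↑(i + 1) : ℝ) + 1) ^ (-α) ≤ ((1 + N) ^ (1 - α) - 1) / (1 - α) := by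
    rw [← hint]
    convert hanti.sum_le_integral using 3
    ring
  rw [Finset.sum_range_succ']
  simp only [CharP.cast_eq_zero, zero_add, Real.one_rpow]
  have hone : 1 ≤ 1 / (1 - α) := by rw [le_div_iff₀ hα]; linarith
  calc _ ≤ ((1 + N) ^ (1 - α) - 1) / (1 - α) + 1 := by gcongr
    _ ≤ ((N + 1 : ℕ) : ℝ) ^ (1 - α) / (1 - α) := by
        rw [sub_div, Nat.cast_succ, add_comm (N:ℝ)]
        linarith

lemma integral_comp_abs_eq {f : ℝ → ℝ} (hf : Continuous f) {T : ℝ} (hT : 0 ≤ T) :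
    ∫ s in -T..T, f |s| = 2 * ∫ t in 0..T, f t := by
  have hg : Continuous fun s => f |s| := hf.comp continuous_abs
  have hpos : ∫ s in (0:ℝ)..T, f |s| = ∫ t in 0..T, f t :=
    intervalIntegral.integral_congr fun s hs => by
      rw [Set.uIcc_of_le hT] at hs
      rw [abs_of_nonneg hs.1]
  have hneg : ∫ s in -T..0, f |s| = ∫ s in (0:ℝ)..T, f |s| := by
    simpa only [abs_neg, neg_zero] using
      (intervalIntegral.integral_comp_neg (a := 0) (b := T) fun s => f |s|).symm
  rw [← intervalIntegral.integral_add_adjacent_intervals (b := 0)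
    (hg.intervalIntegrable _ _) (hg.intervalIntegrable _ _), hneg, hpos, two_mul]

lemma integral_le_add_div_of_le_of_le_rpow_neg {f : ℝ → ℝ} {T A B p : ℝ}
    (hf : IntervalIntegrable f volume 0 T) (hT : 0 ≤ T) (hA : 0 ≤ A) (hB : 0 ≤ B) (hp : 1 < p)
    (hfA : ∀ t ∈ Set.Icc 0 T, f t ≤ A) (hfB : ∀ t ∈ Set.Icc 1 T, f t ≤ B * t ^ (-p)) :
    ∫ t in 0..T, f t ≤ A + B / (p - 1) := by
  have hBp : 0 ≤ B / (p - 1) := div_nonneg hB (by linarith)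
  rcases le_total T 1 with hT1 | hT1
  · calc ∫ t in 0..T, f t ≤ ∫ _ in 0..T, A :=
          intervalIntegral.integral_mono_on hT hf intervalIntegrable_const hfA
      _ = T * A := by rw [intervalIntegral.integral_const, smul_eq_mul, sub_zero]
      _ ≤ A + B / (p - 1) := by nlinarith
  have h0 : (0:ℝ) ∉ Set.uIcc 1 T := by
    rw [Set.uIcc_of_le hT1]; exact fun h => absurd h.1 (by norm_num)
  have hhead : ∫ t in (0:ℝ)..1, f t ≤ A :=
    calc ∫ t in (0:ℝ)..1, f t ≤ ∫ _ in (0:ℝ)..1, A :=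
          intervalIntegral.integral_mono_on zero_le_one
            (hf.mono_set (by rw [Set.uIcc_of_le hT, Set.uIcc_of_le zero_le_one]; gcongr))
            intervalIntegrable_const fun t ht => hfA t ⟨ht.1, ht.2.trans hT1⟩
      _ = A := by simp
  have htail : ∫ t in (1:ℝ)..T, f t ≤ B / (p - 1) :=
    calc ∫ t in (1:ℝ)..T, f t ≤ ∫ t in (1:ℝ)..T, B * t ^ (-p) :=
          intervalIntegral.integral_mono_on hT1
            (hf.mono_set (by rw [Set.uIcc_of_le hT, Set.uIcc_of_le hT1]; gcongr; norm_num))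
            ((intervalIntegral.intervalIntegrable_rpow (Or.inr h0)).const_mul B) hfB
      _ = B * ((T ^ (1 - p) - 1) / (1 - p)) := by
          rw [intervalIntegral.integral_const_mul, integral_rpow (Or.inr ⟨by linarith, h0⟩),
            Real.one_rpow, neg_add_eq_sub]
      _ ≤ B * (1 / (p - 1)) := by
          refine mul_le_mul_of_nonneg_left ?_ hB
          rw [div_le_iff_of_neg (by linarith), show 1 / (p - 1) * (1 - p) = -1 by
            rw [one_div_mul_eq_div, ← neg_sub, neg_div, div_self (by linarith)]]
          linarith [Real.rpow_nonneg hT (1 - p)]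
      _ = B / (p - 1) := mul_one_div B _
  rw [← intervalIntegral.integral_add_adjacent_intervals (b := 1)
    (hf.mono_set (by rw [Set.uIcc_of_le hT, Set.uIcc_of_le zero_le_one]; gcongr))
    (hf.mono_set (by rw [Set.uIcc_of_le hT, Set.uIcc_of_le hT1]; gcongr; norm_num))]
  exact add_le_add hhead htail

lemma reg_pos (r : ℝ) : 0 < reg r := Real.sqrt_pos.mpr (by positivity)

lemma one_le_reg (r : ℝ) : 1 ≤ reg r := Real.one_le_sqrt.mpr (by nlinarith)

lemma abs_le_reg (r : ℝ) : |r| ≤ reg r := Real.abs_le_sqrt (by nlinarith)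

lemma continuous_reg : Continuous reg := by unfold reg; fun_prop

lemma prod_reg_rpow_pos {d : ℕ} (x : Fin d → ℤ) (e : ℝ) : 0 < ∏ j, reg (x j : ℝ) ^ e :=
  Finset.prod_pos fun _ _ => Real.rpow_pos_of_pos (reg_pos _) _

lemma inv_sqrt_reg_nonneg (r : ℝ) : 0 ≤ (reg r ^ ((1:ℝ)/2))⁻¹ :=
  inv_nonneg.mpr (Real.rpow_nonneg (reg_pos r).le _)

lemma inv_sqrt_reg_le_one (r : ℝ) : (reg r ^ ((1:ℝ)/2))⁻¹ ≤ 1 :=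
  inv_le_one_of_one_le₀ (Real.one_le_rpow (one_le_reg r) (by norm_num))

lemma inv_sqrt_reg_le_rpow_neg {r c α : ℝ} (hc : 0 < c) (hcr : c ≤ r) (hα0 : 0 ≤ α)
    (hα : α ≤ 1/2) : (reg r ^ ((1:ℝ)/2))⁻¹ ≤ c ^ (-α) := by
  rcases le_or_gt 1 c with h1 | h1
  · rw [Real.rpow_neg hc.le]
    refine inv_anti₀ (by positivity) ?_
    calc c ^ α ≤ c ^ ((1:ℝ)/2) := Real.rpow_le_rpow_of_exponent_le h1 hα
      _ ≤ reg r ^ ((1:ℝ)/2) :=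
        Real.rpow_le_rpow hc.le (hcr.trans ((le_abs_self r).trans (abs_le_reg r))) (by norm_num)
  · exact (inv_sqrt_reg_le_one r).trans
      (Real.one_le_rpow_of_pos_of_le_one_of_nonpos hc h1.le (by linarith))

/-- `Φ(R, x₁)` in the regime `|R| ≤ L^β`, where `γ(R) = 0` and `φ(R) = ⟨R⟩^{1/2}`. -/
def phiSmall (R : ℝ) (x₁ : ℤ) : ℝ :=
  reg (x₁:ℝ) ^ ((1:ℝ)/3) * max 1 (reg R ^ ((1:ℝ)/2) / reg (x₁:ℝ) ^ ((1:ℝ)/2))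

lemma Phi_eq_phiSmall {L : ℕ} {β R : ℝ} (x₁ : ℤ) (hR : |R| ≤ (L:ℝ)^β) :
    Phi L β R x₁ = phiSmall R x₁ := by
  have hLβ : 0 ≤ (L:ℝ)^β := Real.rpow_nonneg (Nat.cast_nonneg L) β
  rw [Phi, gammaFn, varphiFn, aL, if_pos (by linarith), if_pos hR, sub_zero, phiSmall]

lemma phiSmall_pos (R : ℝ) (x₁ : ℤ) : 0 < phiSmall R x₁ :=
  mul_pos (Real.rpow_pos_of_pos (reg_pos _) _) (one_pos.trans_le (le_max_left _ _))

lemma continuous_phiSmall (x₁ : ℤ) : Continuous (phiSmall · x₁) := by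
  unfold phiSmall
  refine continuous_const.mul (continuous_const.max (Continuous.div_const ?_ _))
  exact continuous_reg.rpow_const fun _ => Or.inl (reg_pos _).ne'

lemma inv_phiSmall_le (R : ℝ) (x₁ : ℤ) :
    (phiSmall R x₁)⁻¹ ≤ reg (x₁:ℝ) ^ ((1:ℝ)/6) * (reg R ^ ((1:ℝ)/2))⁻¹ := by
  set X := reg (x₁:ℝ)
  set W := reg R ^ ((1:ℝ)/2)
  have hX : 0 < X := reg_pos _
  have hW : 0 < W := Real.rpow_pos_of_pos (reg_pos _) _
  have hlow : X ^ (-((1:ℝ)/6)) * W ≤ phiSmall R x₁ :=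
    calc X ^ (-((1:ℝ)/6)) * W = X ^ ((1:ℝ)/3) * (W / X ^ ((1:ℝ)/2)) := by
          rw [mul_div_left_comm, ← Real.rpow_sub hX, mul_comm]; norm_num
      _ ≤ phiSmall R x₁ := mul_le_mul_of_nonneg_left (le_max_right _ _) (by positivity)
  calc (phiSmall R x₁)⁻¹ ≤ (X ^ (-((1:ℝ)/6)) * W)⁻¹ := inv_anti₀ (by positivity) hlow
    _ = X ^ ((1:ℝ)/6) * W⁻¹ := by rw [mul_inv, Real.rpow_neg hX.le, inv_inv]

lemma mem_Lambda1 {L : ℕ} {m : ℤ} : m ∈ Lambda1 L ↔ -(L:ℤ) < 2*m ∧ 2*m ≤ L := by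
  simp only [Lambda1, Finset.mem_filter, Finset.mem_Icc]
  omega

lemma card_Lambda1 (L : ℕ) : #(Lambda1 L) = L := by
  have : Lambda1 L = Finset.Ioc ((L:ℤ)/2 - L) ((L:ℤ)/2) := by
    ext m
    rw [mem_Lambda1, Finset.mem_Ioc]
    omega
  rw [this, Int.card_Ioc]
  omega

/-- The one-dimensional normalized sum `∫_{Λ₁*} dk g(k)`. -/
def dualAvg (L : ℕ) (g : ℝ → ℝ) : ℝ := (L:ℝ)⁻¹ * ∑ m ∈ Lambda1 L, g ((m:ℝ) / L)

lemma dIntR_prod (L d : ℕ) (g : Fin d → ℝ → ℝ) :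
    dIntR L d (fun k => ∏ j, g j (k j)) = ∏ j, dualAvg L (g j) := by
  simp only [dIntR, LambdaSet, dpt, dualAvg, Finset.prod_mul_distrib, Finset.prod_univ_sum,
    Finset.prod_const, Finset.card_univ, Fintype.card_fin, inv_pow]

lemma dIntR_mono {L d : ℕ} {f g : (Fin d → ℝ) → ℝ} (h : ∀ k, f k ≤ g k) :
    dIntR L d f ≤ dIntR L d g :=
  mul_le_mul_of_nonneg_left (Finset.sum_le_sum fun _ _ => h _) (by positivity)

lemma dualAvg_nonneg {L : ℕ} {g : ℝ → ℝ} (h : ∀ r, 0 ≤ g r) : 0 ≤ dualAvg L g :=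
  mul_nonneg (by positivity) (Finset.sum_nonneg fun _ _ => h _)

lemma dualAvg_le_of_le {L : ℕ} {g : ℝ → ℝ} {c : ℝ} (hL : L ≠ 0) (h : ∀ r, g r ≤ c) :
    dualAvg L g ≤ c := by
  have hL' : (L:ℝ) ≠ 0 := Nat.cast_ne_zero.mpr hL
  calc dualAvg L g ≤ (L:ℝ)⁻¹ * ∑ _m ∈ Lambda1 L, c :=
        mul_le_mul_of_nonneg_left (Finset.sum_le_sum fun _ _ => h _) (by positivity)
    _ = c := by rw [Finset.sum_const, card_Lambda1, nsmul_eq_mul, inv_mul_cancel_left₀ hL']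

lemma continuous_dIntR {L d : ℕ} {f : ℝ → (Fin d → ℝ) → ℝ} (hf : ∀ k, Continuous (f · k)) :
    Continuous fun t => dIntR L d (f t) :=
  continuous_const.mul (continuous_finsetSum _ fun _ _ => hf _)

lemma norm_zfn_zero (k : ℝ) : ‖zfn 0 k‖ = 2 * |sin (π * k)| := by
  have h : Complex.exp (-(2 * π * Complex.I) * k) = Complex.exp (Complex.I * ↑(-(2 * π * k))) := by
    push_cast; ring_nf
  rw [zfn, if_pos rfl, h, norm_sub_rev, Complex.norm_exp_I_mul_ofReal_sub_one, norm_mul,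
    Real.norm_two, Real.norm_eq_abs, show -(2 * π * k) / 2 = -(π * k) by ring, Real.sin_neg,
    abs_neg]

lemma norm_zfn_of_ne_zero {ξ : ℕ} (hξ : ξ ≠ 0) (k : ℝ) : ‖zfn ξ k‖ = 2 * |cos (π * k)| := by
  have h : 1 + Complex.exp (-(2 * π * Complex.I) * k)
      = -(Complex.exp (Complex.I * ↑(π - 2 * π * k)) - 1) := by
    rw [show Complex.I * ↑(π - 2 * π * k) = π * Complex.I + -(2 * π * Complex.I) * k by
      push_cast; ring, Complex.exp_add, Complex.exp_pi_mul_I]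
    ring
  rw [zfn, if_neg hξ, h, norm_neg, Complex.norm_exp_I_mul_ofReal_sub_one, norm_mul,
    Real.norm_two, Real.norm_eq_abs, show (π - 2 * π * k) / 2 = π / 2 - π * k by ring,
    Real.sin_pi_div_two_sub]

lemma norm_zfn_le_two (ξ : ℕ) (k : ℝ) : ‖zfn ξ k‖ ≤ 2 := by
  by_cases hξ : ξ = 0
  · rw [hξ, norm_zfn_zero]; linarith [Real.abs_sin_le_one (π * k)]
  · rw [norm_zfn_of_ne_zero hξ]; linarith [Real.abs_cos_le_one (π * k)]

lemma four_mul_abs_le_norm_zfn_zero {k : ℝ} (hk : |k| ≤ 1/2) : 4 * |k| ≤ ‖zfn 0 k‖ := by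
  have hjordan : 2 / π * (π * |k|) ≤ sin (π * |k|) :=
    Real.mul_le_sin (by positivity) (by nlinarith [Real.pi_pos])
  have habs : sin (π * |k|) ≤ |sin (π * k)| := by
    rcases abs_choice k with h | h <;> rw [h]
    · exact le_abs_self _
    · rw [mul_neg, Real.sin_neg]; exact neg_le_abs _
  rw [norm_zfn_zero]
  field_simp at hjordan
  linarith

lemma four_mul_le_norm_zfn_of_ne_zero {ξ : ℕ} (hξ : ξ ≠ 0) {k : ℝ} (hk : |k| ≤ 1/2) :
    4 * (1/2 - |k|) ≤ ‖zfn ξ k‖ := by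
  have hjordan : 2 / π * (π / 2 - π * |k|) ≤ sin (π / 2 - π * |k|) :=
    Real.mul_le_sin (by nlinarith [Real.pi_pos]) (by nlinarith [Real.pi_pos, abs_nonneg k])
  rw [Real.sin_pi_div_two_sub] at hjordan
  rw [norm_zfn_of_ne_zero hξ, ← Real.cos_abs (π * k), abs_mul, abs_of_pos Real.pi_pos]
  field_simp at hjordan
  linarith [le_abs_self (cos (π * |k|))]

lemma two_mul_natAbs_le_of_mem_Lambda1 {L : ℕ} {m : ℤ} (hm : m ∈ Lambda1 L) :
    2 * m.natAbs ≤ L := by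
  rw [mem_Lambda1] at hm
  omega

/-- A lower bound, in units of `1/L`, for the distance from `m/L` to the zero of `z_ξ`
(`0` for `ξ = 0`, `±1/2` otherwise). -/
def nuIdx (ξ L : ℕ) (m : ℤ) : ℕ := if ξ = 0 then m.natAbs else L / 2 - m.natAbs

lemma nuIdx_le {ξ L : ℕ} {m : ℤ} (hm : m ∈ Lambda1 L) : nuIdx ξ L m ≤ L / 2 := by
  have := two_mul_natAbs_le_of_mem_Lambda1 hm
  unfold nuIdx
  split <;> omega

lemma card_filter_nuIdx_eq_le_two (ξ L j : ℕ) : #{m ∈ Lambda1 L | nuIdx ξ L m = j} ≤ 2 := by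
  obtain ⟨n, hn⟩ : ∃ n : ℕ, ∀ m ∈ Lambda1 L, nuIdx ξ L m = j → m.natAbs = n := by
    by_cases hξ : ξ = 0
    · exact ⟨j, fun m _ h => by simpa [nuIdx, hξ] using h⟩
    · refine ⟨L / 2 - j, fun m hm h => ?_⟩
      have := two_mul_natAbs_le_of_mem_Lambda1 hm
      simp only [nuIdx, hξ, if_false] at h
      omega
  calc #{m ∈ Lambda1 L | nuIdx ξ L m = j} ≤ #({(n:ℤ), -(n:ℤ)} : Finset ℤ) := by
        refine Finset.card_le_card fun m hm => ?_
        rw [Finset.mem_filter] at hm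
        rcases Int.natAbs_eq_iff.mp (hn m hm.1 hm.2) with h | h <;> simp [h]
    _ ≤ 2 := Finset.card_le_two

lemma four_mul_nuIdx_div_le_norm_zfn {ξ L : ℕ} {m : ℤ} (hm : m ∈ Lambda1 L) :
    4 * (nuIdx ξ L m : ℝ) / L ≤ ‖zfn ξ ((m:ℝ) / L)‖ := by
  have hm2 := two_mul_natAbs_le_of_mem_Lambda1 hm
  have hm2' : 2 * (m.natAbs : ℝ) ≤ L := by exact_mod_cast hm2
  rcases (Nat.cast_nonneg L : (0:ℝ) ≤ L).eq_or_lt with hL | hL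
  · simp [← hL]
  have habs : |(m:ℝ) / L| = m.natAbs / L := by
    rw [abs_div, Nat.abs_cast, Nat.cast_natAbs, Int.cast_abs]
  have hk : |(m:ℝ) / L| ≤ 1/2 := by
    rw [habs, div_le_iff₀ hL]
    linarith
  by_cases hξ : ξ = 0
  · subst hξ
    calc 4 * (nuIdx 0 L m : ℝ) / L = 4 * |(m:ℝ) / L| := by rw [habs, nuIdx, if_pos rfl]; ring
      _ ≤ _ := four_mul_abs_le_norm_zfn_zero hk
  · refine le_trans ?_ (four_mul_le_norm_zfn_of_ne_zero hξ hk)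
    have hν : (nuIdx ξ L m : ℝ) ≤ L / 2 - m.natAbs := by
      have h := Nat.div_mul_le_self L 2
      rw [nuIdx, if_neg hξ, Nat.cast_sub (by omega)]
      have : ((L / 2 : ℕ) : ℝ) * 2 ≤ L := by exact_mod_cast h
      linarith
    rw [habs, div_le_iff₀ hL]
    have : 4 * (1 / 2 - (m.natAbs:ℝ) / L) * L = 2 * L - 4 * m.natAbs := by field_simp; ring
    linarith

lemma sum_inv_sqrt_reg_le {L ξ : ℕ} {α t : ℝ} (hL : L ≠ 0) (hα0 : 0 ≤ α) (hα : α ≤ 1/2)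
    (ht : 0 < t) :
    ∑ m ∈ Lambda1 L, (reg (t * ‖zfn ξ ((m:ℝ) / L)‖) ^ ((1:ℝ)/2))⁻¹
      ≤ 2 * (1 + (4 * t / L) ^ (-α) * ∑ i ∈ range (L / 2), ((i:ℝ) + 1) ^ (-α)) := by
  set c := 4 * t / L with hc
  have hc0 : 0 < c := by positivity
  let G : ℕ → ℝ := fun j => if j = 0 then 1 else c ^ (-α) * (j:ℝ) ^ (-α)
  have hpoint : ∀ m ∈ Lambda1 L,
      (reg (t * ‖zfn ξ ((m:ℝ) / L)‖) ^ ((1:ℝ)/2))⁻¹ ≤ G (nuIdx ξ L m) := by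
    intro m hm
    by_cases hν : nuIdx ξ L m = 0
    · simpa only [G, if_pos hν] using inv_sqrt_reg_le_one _
    simp only [G, if_neg hν]
    have hν0 : (0:ℝ) < nuIdx ξ L m := by positivity
    rw [← Real.mul_rpow hc0.le hν0.le]
    refine inv_sqrt_reg_le_rpow_neg (by positivity) ?_ hα0 hα
    calc c * nuIdx ξ L m = t * (4 * nuIdx ξ L m / L) := by rw [hc]; ring
      _ ≤ t * ‖zfn ξ ((m:ℝ) / L)‖ := by gcongr; exact four_mul_nuIdx_div_le_norm_zfn hm
  have hG : ∀ j ∈ range (L / 2 + 1), 0 ≤ G j := fun j _ => by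
    simp only [G]
    split <;> positivity
  have hfiber : ∑ m ∈ Lambda1 L, G (nuIdx ξ L m) ≤ 2 * ∑ j ∈ range (L / 2 + 1), G j := by
    exact_mod_cast sum_comp_le_mul_sum
      (fun m hm => Finset.mem_range.mpr (Nat.lt_succ_of_le (nuIdx_le hm))) hG
      (fun j _ => card_filter_nuIdx_eq_le_two ξ L j)
  have hrange : ∑ j ∈ range (L / 2 + 1), G j
      = 1 + c ^ (-α) * ∑ i ∈ range (L / 2), ((i:ℝ) + 1) ^ (-α) := by
    rw [Finset.sum_range_succ', add_comm, Finset.mul_sum]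
    simp [G]
  calc _ ≤ ∑ m ∈ Lambda1 L, G (nuIdx ξ L m) := Finset.sum_le_sum hpoint
    _ ≤ 2 * ∑ j ∈ range (L / 2 + 1), G j := hfiber
    _ = _ := by rw [hrange]

lemma dualAvg_inv_sqrt_reg_le {L ξ : ℕ} {α t : ℝ} (hα0 : 0 ≤ α) (hα : α ≤ 1/2) (ht : 1 ≤ t)
    (htL : t ≤ L / 4) :
    dualAvg L (fun r => (reg (t * ‖zfn ξ r‖) ^ ((1:ℝ)/2))⁻¹)
      ≤ (1/2 + 2 ^ (-α) / (1 - α)) * t ^ (-α) := by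
  have hL : (4:ℝ) ≤ L := by linarith
  have ht0 : 0 < t := by linarith
  have hα1 : 0 < 1 - α := by linarith
  have hhalf : ((L / 2 : ℕ) : ℝ) ≤ L / 2 := by
    rw [le_div_iff₀ two_pos]; exact_mod_cast Nat.div_mul_le_self L 2
  have hpsum : ∑ i ∈ range (L / 2), ((i:ℝ) + 1) ^ (-α) ≤ ((L:ℝ) / 2) ^ (1 - α) / (1 - α) :=
    (sum_range_add_one_rpow_neg_le _ hα0 (by linarith)).trans (by gcongr)
  have hscale : 2 / L * ((4 * t / L) ^ (-α) * ((L:ℝ) / 2) ^ (1 - α)) = 2 ^ (-α) * t ^ (-α) := by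
    have hsplit : ((L:ℝ) / 2) ^ (1 - α) = L / 2 * ((L:ℝ) / 2) ^ (-α) := by
      rw [sub_eq_add_neg, Real.rpow_add (by positivity), Real.rpow_one]
    calc 2 / L * ((4 * t / L) ^ (-α) * ((L:ℝ) / 2) ^ (1 - α))
        = (2 / L * (L / 2)) * (4 * t / L * (L / 2)) ^ (-α) := by
          rw [hsplit, Real.mul_rpow (by positivity) (by positivity)]; ring
      _ = (2 * t) ^ (-α) := by
          rw [show 4 * t / L * (L / 2) = 2 * t by field_simp; ring,
            show 2 / (L:ℝ) * (L / 2) = 1 by field_simp, one_mul]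
      _ = 2 ^ (-α) * t ^ (-α) := Real.mul_rpow zero_le_two ht0.le
  have hfirst : 2 / L ≤ 1/2 * t ^ (-α) := by
    have : t ^ α ≤ L / 4 :=
      (Real.rpow_le_rpow_of_exponent_le ht (show α ≤ 1 by linarith)).trans (by rwa [Real.rpow_one])
    rw [Real.rpow_neg ht0.le]
    calc 2 / (L:ℝ) = 1/2 * ((L:ℝ) / 4)⁻¹ := by field_simp; ring
      _ ≤ 1/2 * (t ^ α)⁻¹ := by gcongr
  calc dualAvg L (fun r => (reg (t * ‖zfn ξ r‖) ^ ((1:ℝ)/2))⁻¹)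
      ≤ (L:ℝ)⁻¹ * (2 * (1 + (4 * t / L) ^ (-α) * (((L:ℝ) / 2) ^ (1 - α) / (1 - α)))) := by
        refine mul_le_mul_of_nonneg_left ((sum_inv_sqrt_reg_le (by rintro rfl; norm_num at hL) hα0 hα ht0).trans ?_)
          (by positivity)
        gcongr
    _ = 2 / L + 2 / L * ((4 * t / L) ^ (-α) * ((L:ℝ) / 2) ^ (1 - α)) / (1 - α) := by ring
    _ ≤ 1/2 * t ^ (-α) + 2 ^ (-α) * t ^ (-α) / (1 - α) := by rw [hscale]; linarith
    _ = (1/2 + 2 ^ (-α) / (1 - α)) * t ^ (-α) := by ring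

/-- `∫_{Λ*} dk Φ^d(R̃_s^{ξ'}(k), x)⁻¹` for `|s| ≤ L^β / 4`, as a function of `t = |s|`. -/
def smallIntegrand (L d ξ : ℕ) (x : Fin d → ℤ) (t : ℝ) : ℝ :=
  dIntR L d (fun k => ∏ j, (phiSmall (t * ‖zfn ξ (k j)‖) (x j))⁻¹)

lemma dIntR_inv_Phid_eq_smallIntegrand {L d ξ : ℕ} {β s : ℝ} (x : Fin d → ℤ)
    (hs : |s| ≤ (L:ℝ) ^ β / 4) :
    dIntR L d (fun k => (Phid L d β (RtildeS ξ s k) x)⁻¹) = smallIntegrand L d ξ x |s| := by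
  refine congrArg _ (funext fun k => ?_)
  rw [Phid, ← Finset.prod_inv_distrib]
  refine Finset.prod_congr rfl fun j _ => ?_
  have hR : 0 ≤ RtildeS ξ s k j := by unfold RtildeS; positivity
  rw [Phi_eq_phiSmall _ ?_]
  · rfl
  rw [abs_of_nonneg hR, RtildeS]
  nlinarith [norm_zfn_le_two ξ (k j), abs_nonneg s]

lemma continuous_smallIntegrand (L d ξ : ℕ) (x : Fin d → ℤ) :
    Continuous (smallIntegrand L d ξ x) :=
  continuous_dIntR fun _ => continuous_finsetProd _ fun j _ =>
    ((continuous_phiSmall (x j)).comp (continuous_mul_const _)).inv₀ fun _ => (phiSmall_pos _ _).ne'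

lemma smallIntegrand_le_mul_pow (L d ξ : ℕ) (x : Fin d → ℤ) (t : ℝ) :
    smallIntegrand L d ξ x t ≤ (∏ j, reg (x j : ℝ) ^ ((1:ℝ)/6))
      * dualAvg L (fun r => (reg (t * ‖zfn ξ r‖) ^ ((1:ℝ)/2))⁻¹) ^ d := by
  set h : ℝ → ℝ := fun r => (reg (t * ‖zfn ξ r‖) ^ ((1:ℝ)/2))⁻¹
  have hconst (c : ℝ) : dualAvg L (fun r => c * h r) = c * dualAvg L h := by
    simp only [dualAvg, ← Finset.mul_sum]; ring
  calc smallIntegrand L d ξ x t ≤ dIntR L d (fun k => ∏ j, (reg (x j : ℝ) ^ ((1:ℝ)/6) * h (k j))) :=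
        dIntR_mono fun k => Finset.prod_le_prod (fun j _ => (inv_pos.mpr (phiSmall_pos _ _)).le)
          fun j _ => inv_phiSmall_le _ _
    _ = (∏ j, reg (x j : ℝ) ^ ((1:ℝ)/6)) * dualAvg L h ^ d := by
        rw [dIntR_prod L d (fun j r => reg (x j : ℝ) ^ ((1:ℝ)/6) * h r)]
        simp only [hconst, Finset.prod_mul_distrib, Finset.prod_const, Finset.card_univ,
          Fintype.card_fin]

lemma smallIntegrand_le (d ξ : ℕ) {L : ℕ} (hL : L ≠ 0) (x : Fin d → ℤ) (t : ℝ) :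
    smallIntegrand L d ξ x t ≤ ∏ j, reg (x j : ℝ) ^ ((1:ℝ)/6) := by
  refine (smallIntegrand_le_mul_pow L d ξ x t).trans (mul_le_of_le_one_right (prod_reg_rpow_pos x _).le ?_)
  exact pow_le_one₀ (dualAvg_nonneg fun _ => inv_sqrt_reg_nonneg _)
    (dualAvg_le_of_le hL fun _ => inv_sqrt_reg_le_one _)

lemma smallIntegrand_le_mul_rpow (d ξ : ℕ) {L : ℕ} (x : Fin d → ℤ) {α t : ℝ} (hα0 : 0 ≤ α)
    (hα : α ≤ 1/2) (ht : 1 ≤ t) (htL : t ≤ L / 4) :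
    smallIntegrand L d ξ x t ≤ (∏ j, reg (x j : ℝ) ^ ((1:ℝ)/6))
      * (1/2 + 2 ^ (-α) / (1 - α)) ^ d * t ^ (-(d * α)) := by
  refine (smallIntegrand_le_mul_pow L d ξ x t).trans ?_
  rw [mul_assoc, show t ^ (-(d * α)) = (t ^ (-α)) ^ d by
    rw [← Real.rpow_natCast, ← Real.rpow_mul (by linarith)]; ring_nf, ← mul_pow]
  exact mul_le_mul_of_nonneg_left (pow_le_pow_left₀ (dualAvg_nonneg fun _ => inv_sqrt_reg_nonneg _)
    (dualAvg_inv_sqrt_reg_le hα0 hα ht htL) d) (prod_reg_rpow_pos x _).le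

lemma integral_dIntR_inv_Phid_eq (L d ξ : ℕ) (β : ℝ) (x : Fin d → ℤ) :
    ∫ s in (-((L:ℝ)^β/4))..((L:ℝ)^β/4), dIntR L d (fun k => (Phid L d β (RtildeS ξ s k) x)⁻¹)
      = 2 * ∫ t in 0..(L:ℝ)^β/4, smallIntegrand L d ξ x t := by
  have hT : 0 ≤ (L:ℝ) ^ β / 4 := by positivity
  rw [intervalIntegral.integral_congr (g := fun s => smallIntegrand L d ξ x |s|) fun s hs =>
      dIntR_inv_Phid_eq_smallIntegrand x
        (abs_le.mpr (by rwa [Set.uIcc_of_le (neg_le_self hT)] at hs)),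
    integral_comp_abs_eq (continuous_smallIntegrand L d ξ x) hT]

lemma half_add_rpow_div_le {b : ℝ} (hb0 : 0 < b) (hb1 : b ≤ 1) :
    1/2 + 2 ^ (-((1 - b) / 2)) / (1 - (1 - b) / 2) ≤ 2 ^ ((1 - b) / 2) * (1 + 2 / (π * b)) := by
  set α := (1 - b) / 2
  have h2α : 1 ≤ (2:ℝ) ^ α := Real.one_le_rpow one_le_two (by simp only [α]; linarith)
  have hbern : (2:ℝ) ^ b ≤ 1 + b := by
    simpa [one_add_one_eq_two] using
      rpow_one_add_le_one_add_mul_self (s := 1) (by norm_num) hb0.le hb1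
  have hneg : (2:ℝ) ^ (-α) = 2 ^ α * 2 ^ b / 2 := by
    rw [eq_div_iff two_ne_zero, ← Real.rpow_add two_pos]
    nth_rw 2 [← Real.rpow_one 2]
    rw [← Real.rpow_add two_pos]
    congr 1
    simp only [α]
    ring
  have hfirst : (2:ℝ) ^ (-α) / (1 - α) ≤ 2 ^ α := by
    rw [hneg, show 1 - α = (1 + b) / 2 by ring, div_div_div_cancel_right₀ two_ne_zero,
      div_le_iff₀ (by linarith)]
    gcongr
  have hsecond : (1:ℝ) / 2 ≤ 2 / (π * b) := by
    rw [div_le_div_iff₀ two_pos (by positivity)]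
    nlinarith [Real.pi_le_four, Real.pi_pos]
  nlinarith

lemma two_mul_one_add_le_c6b {d : ℕ} {b : ℝ} (hb0 : 0 < b) (hbd : 2 < d * (1 - b)) :
    2 * (1 + (1/2 + 2 ^ (-((1 - b) / 2)) / (1 - (1 - b) / 2)) ^ d / (d * ((1 - b) / 2) - 1))
      ≤ c6b d b := by
  have hb1 : b < 1 := by nlinarith [(Nat.cast_nonneg d : (0:ℝ) ≤ d)]
  have hden : 0 < d * ((1 - b) / 2) - 1 := by linarith
  have hC0 : 0 ≤ 1/2 + (2:ℝ) ^ (-((1 - b) / 2)) / (1 - (1 - b) / 2) := by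
    have : 0 < 1 - (1 - b) / 2 := by linarith
    positivity
  have hc6b : c6b d b = 2 + 2 * (2 ^ ((1 - b) / 2) * (1 + 2 / (π * b))) ^ d
      / (d * ((1 - b) / 2) - 1) := by
    rw [c6b, mul_pow, ← Real.rpow_natCast ((2:ℝ) ^ ((1 - b) / 2)) d, ← Real.rpow_mul zero_le_two,
      Real.rpow_add two_pos, Real.rpow_one]
    field_simp
  rw [hc6b, mul_add, mul_one, mul_div_assoc]
  gcongr
  exact half_add_rpow_div_le hb0 hb1.le

lemma two_mul_integral_smallIntegrand_le {L : ℕ} (d ξ : ℕ) (x : Fin d → ℤ) (hL : L ≠ 0) {T b : ℝ}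
    (hT : 0 ≤ T) (hTL : T ≤ L / 4) (hb0 : 0 < b) (hdb : 2 < d * (1 - b)) :
    2 * ∫ t in 0..T, smallIntegrand L d ξ x t ≤ c6b d b * ∏ j, reg (x j : ℝ) ^ ((1:ℝ)/6) := by
  set P := ∏ j, reg (x j : ℝ) ^ ((1:ℝ)/6)
  have hP : 0 < P := prod_reg_rpow_pos x _
  have hb1 : b < 1 := by nlinarith [(Nat.cast_nonneg d : (0:ℝ) ≤ d)]
  have hp : 1 < d * ((1 - b) / 2) := by linarith [mul_div_assoc (d:ℝ) (1 - b) 2]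
  set C := 1/2 + 2 ^ (-((1 - b) / 2)) / (1 - (1 - b) / 2)
  have hC : 0 ≤ C := add_nonneg (by norm_num) (div_nonneg (by positivity) (by linarith))
  calc 2 * ∫ t in 0..T, smallIntegrand L d ξ x t
      ≤ 2 * (P + P * C ^ d / (d * ((1 - b) / 2) - 1)) := by
        gcongr
        exact integral_le_add_div_of_le_of_le_rpow_neg
          ((continuous_smallIntegrand L d ξ x).intervalIntegrable _ _) hT hP.le (by positivity) hp
          (fun t _ => smallIntegrand_le d ξ hL x t)
          fun t ht => smallIntegrand_le_mul_rpow d ξ x (by linarith) (by linarith) ht.1 (ht.2.trans hTL)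
    _ = P * (2 * (1 + C ^ d / (d * ((1 - b) / 2) - 1))) := by ring
    _ ≤ c6b d b * P := by rw [mul_comm]; gcongr; exact two_mul_one_add_le_c6b hb0 hdb

lemma le_c6_mul {d : ℕ} (hd : 2 < d) {y P : ℝ} (hP : 0 < P)
    (h : ∀ b : ℝ, 0 < b → b < 1 - 2 / d → y ≤ c6b d b * P) : y ≤ c6 d * P := by
  have hd' : (2:ℝ) / d < 1 := by
    rw [div_lt_one (by positivity)]; exact_mod_cast hd
  rw [← div_le_iff₀ hP]
  refine le_csInf ⟨_, (1 - 2 / d) / 2, by linarith, by linarith, rfl⟩ ?_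
  rintro _ ⟨b, hb0, hb1, rfl⟩
  rw [div_le_iff₀ hP]
  exact h b hb0 hb1

theorem inverse_weight_integral_general
    (d L : ℕ) (hd : 3 ≤ d) (hL : 2 ≤ L) (β : ℝ) (hβ : 0 < β ∧ β < 1 - 2/(d:ℝ))
    (x : Fin d → ℤ) (ξ : ℕ) :
    (∫ s in (-((L:ℝ)^β/4))..((L:ℝ)^β/4),
      dIntR L d (fun k => (Phid L d β (RtildeS ξ s k) x)⁻¹)) ≤
      c6 d * ∏ j, reg (x j : ℝ) ^ ((1:ℝ)/6) := by
  have hd0 : (0:ℝ) < d := by positivity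
  have hβ1 : β ≤ 1 := by linarith [div_pos two_pos hd0]
  have hTL : (L:ℝ) ^ β / 4 ≤ L / 4 := by
    gcongr
    exact Real.rpow_le_self_of_one_le (by exact_mod_cast (by omega : 1 ≤ L)) hβ1
  rw [integral_dIntR_inv_Phid_eq]
  refine le_c6_mul (by omega) (prod_reg_rpow_pos x _) fun b hb0 hbd =>
    two_mul_integral_smallIntegrand_le d ξ x (by omega) (by positivity) hTL hb0 ?_
  rw [lt_sub_comm, div_lt_iff₀ hd0] at hbd
  linarith

theorem inverse_weight_integral
    (d L : ℕ) (hd : 3 ≤ d) (hL : 2 ≤ L) (β : ℝ) (hβ : 0 < β ∧ β < 1 - 2/(d:ℝ))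
    (x : Fin d → ℤ) (hx : x ∈ LambdaSet L d) (ξ : ℕ) (hξ : ξ = 0 ∨ ξ = 1) :
    (∫ s in (-((L:ℝ)^β/4))..((L:ℝ)^β/4),
      dIntR L d (fun k => (Phid L d β (RtildeS ξ s k) x)⁻¹)) ≤
      c6 d * ∏ j, reg (x j : ℝ) ^ ((1:ℝ)/6) :=
  inverse_weight_integral_general d L hd hL β hβ x ξ

end KWP
end
end

section
/- (Nonlinear Grönwall bound, proved within Proposition 6.2) Let c > 0 and T* > 0. Suppose g : [0,T*] → [0,∞) is continuous, g(0) > 0, and satisfies g(T) ≤ g(0) + (c/2)·g(T)·∫₀^T g(t) dt for all T ∈ [0,T*]. Then for every T ∈ [0,T*] with c·g(0)·T < 1: g(T) ≤ g(0)/√(1 − c·g(0)·T). -/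
/-!
Write `h(s) = ∫₀^s g`. Since `g h = (h² / 2)'`, integrating the hypothesis over `[0, s]` gives
the quadratic inequality `h(s) ≤ g(0) s + (c/4) h(s)²`. When `c g(0) s < 1` the quadratic
`(c/4) x² - x + g(0) s` has the two roots `(2/c)(1 ∓ √(1 - c g(0) s))`, and `h`, which starts at
`0` and cannot reach the value `2/c` in between (there the inequality would force `c g(0) s ≥ 1`),
stays below the smaller root. Substituting this bound on `h(T)` back into the hypothesis at `T`
gives the claim.
-/

noncomputable section

namespace KWP

open Set intervalIntegral

theorem _root_.Continuous.integral_mul_primitive {g : ℝ → ℝ} (hg : Continuous g) (a b : ℝ) :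
    ∫ t in a..b, g t * ∫ u in a..t, g u = (∫ u in a..b, g u) ^ 2 / 2 := by
  have hF : ∀ x, HasDerivAt (fun s => ∫ u in a..s, g u) (g x) x := fun x =>
    (hg.integral_hasStrictDerivAt a x).hasDerivAt
  have hFc : Continuous fun s => ∫ u in a..s, g u :=
    continuous_iff_continuousAt.2 fun x => (hF x).continuousAt
  have hsq : ∀ x ∈ uIcc a b, HasDerivAt (fun s => (∫ u in a..s, g u) ^ 2 / 2)
      (g x * ∫ u in a..x, g u) x := fun x _ =>
    (((hF x).pow 2).div_const 2).congr_deriv (by push_cast; ring)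
  rw [integral_eq_sub_of_hasDerivAt hsq ((hg.mul hFc).intervalIntegrable a b), integral_same]
  ring

theorem integral_le_of_le_add_mul_primitive {g : ℝ → ℝ} (hg : Continuous g) {a b A k : ℝ}
    (hab : a ≤ b) (h : ∀ t ∈ Icc a b, g t ≤ A + k * g t * ∫ u in a..t, g u) :
    ∫ u in a..b, g u ≤ A * (b - a) + k / 2 * (∫ u in a..b, g u) ^ 2 := by
  have hgF : Continuous fun t => g t * ∫ u in a..t, g u :=
    hg.mul (continuous_primitive (fun _ _ => hg.intervalIntegrable _ _) a)
  calc ∫ u in a..b, g u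
      ≤ ∫ t in a..b, (A + k * (g t * ∫ u in a..t, g u)) :=
        integral_mono_on hab (hg.intervalIntegrable a b)
          ((continuous_const.add (continuous_const.mul hgF)).intervalIntegrable a b)
          fun t ht => (h t ht).trans_eq (by ring)
    _ = A * (b - a) + k * ∫ t in a..b, g t * ∫ u in a..t, g u := by
        rw [integral_add intervalIntegrable_const ((hgF.intervalIntegrable a b).const_mul k),
          integral_const_mul, integral_const, smul_eq_mul, mul_comm]
    _ = A * (b - a) + k / 2 * (∫ u in a..b, g u) ^ 2 := by
        rw [hg.integral_mul_primitive]; ring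

theorem le_two_div_mul_one_sub_sqrt {c b x : ℝ} (hc : 0 < c) (hb : c * b ≤ 1)
    (hx : x ≤ b + c / 4 * x ^ 2) (hx2 : x < 2 / c) :
    x ≤ 2 / c * (1 - √(1 - c * b)) := by
  set r := √(1 - c * b)
  have hr : 0 ≤ r := Real.sqrt_nonneg _
  have hr2 : r ^ 2 = 1 - c * b := Real.sq_sqrt (by linarith)
  -- `(c x - 2(1 - r)) (c x - 2(1 + r)) = 4c (c/4 x² - x + b) ≥ 0`, and the second factor is negative.
  have hprod : 0 ≤ (c * x - 2 * (1 - r)) * (c * x - 2 * (1 + r)) := by nlinarith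
  have hlt : c * x < 2 * (1 + r) := by
    rw [lt_div_iff₀ hc] at hx2; linarith
  have hle : c * x ≤ 2 * (1 - r) := by nlinarith
  rw [div_mul_eq_mul_div, le_div_iff₀ hc]; linarith

theorem lt_two_div_of_forall_le_add_sq {F : ℝ → ℝ} {a c T : ℝ} (hc : 0 < c) (ha : 0 ≤ a)
    (hT : 0 ≤ T) (hcaT : c * a * T < 1) (hF : ContinuousOn F (Icc 0 T)) (hF0 : F 0 = 0)
    (h : ∀ s ∈ Icc 0 T, F s ≤ a * s + c / 4 * F s ^ 2) : F T < 2 / c := by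
  by_contra! hge
  obtain ⟨s, hs, hFs⟩ := intermediate_value_Icc hT hF ⟨by rw [hF0]; positivity, hge⟩
  have hcas : c * a * s ≤ c * a * T := by gcongr; exact hs.2
  have hcross := h s hs
  rw [hFs] at hcross
  have : 1 ≤ c * a * s := by
    field_simp at hcross; nlinarith
  linarith

theorem le_div_of_le_add_mul_of_le {y y₀ k x r : ℝ} (hy : 0 ≤ y) (hk : 0 < k) (hr : 0 < r)
    (h : y ≤ y₀ + k / 2 * y * x) (hx : x ≤ 2 / k * (1 - r)) : y ≤ y₀ / r := by
  have hkx : k / 2 * x ≤ 1 - r := by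
    calc k / 2 * x ≤ k / 2 * (2 / k * (1 - r)) := by gcongr
      _ = 1 - r := by field_simp
  rw [le_div_iff₀ hr]
  nlinarith [mul_le_mul_of_nonneg_left hkx hy]

theorem nonlinear_gronwall_bound_general (c Tstar : ℝ) (hc : 0 < c)
    (g : ℝ → ℝ) (hcont : ContinuousOn g (Set.Icc 0 Tstar))
    (hnn : ∀ t ∈ Set.Icc (0:ℝ) Tstar, 0 ≤ g t)
    (hineq : ∀ T ∈ Set.Icc (0:ℝ) Tstar, g T ≤ g 0 + (c/2) * g T * ∫ t in (0:ℝ)..T, g t) :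
    ∀ T ∈ Set.Icc (0:ℝ) Tstar, c * g 0 * T < 1 →
      g T ≤ g 0 / Real.sqrt (1 - c * g 0 * T) := by
  intro T hT hcT
  have hsub : Icc 0 T ⊆ Icc 0 Tstar := Icc_subset_Icc_right hT.2
  set G := IccExtend hT.1 ((Icc 0 T).domRestrict g)
  have hG : Continuous G := continuous_IccExtend_iff.2 (hcont.mono hsub).domRestrict
  have hGg : EqOn G g (Icc 0 T) := fun t ht => IccExtend_of_mem _ _ ht
  have hprim : ∀ s ∈ Icc 0 T, ∫ t in 0..s, G t = ∫ t in 0..s, g t := fun s hs =>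
    integral_congr fun t ht => hGg (Icc_subset_Icc_right hs.2 (by rwa [uIcc_of_le hs.1] at ht))
  have hquad : ∀ s ∈ Icc 0 T, ∫ t in 0..s, G t ≤ g 0 * s + c / 4 * (∫ t in 0..s, G t) ^ 2 := by
    intro s hs
    have := integral_le_of_le_add_mul_primitive hG hs.1 fun t ht => by
      have htT : t ∈ Icc 0 T := ⟨ht.1, ht.2.trans hs.2⟩
      rw [hGg htT, hprim t htT]
      exact hineq t (hsub htT)
    rwa [sub_zero, div_div, show (2 : ℝ) * 2 = 4 by norm_num] at this
  have hg0 : 0 ≤ g 0 := hnn 0 ⟨le_rfl, hT.1.trans hT.2⟩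
  have hbelow := lt_two_div_of_forall_le_add_sq (F := fun s => ∫ t in 0..s, G t) hc hg0 hT.1 hcT
    (continuous_primitive (fun _ _ => hG.intervalIntegrable _ _) 0).continuousOn
    integral_same hquad
  have hFT := le_two_div_mul_one_sub_sqrt hc (by linarith) (hquad T (right_mem_Icc.2 hT.1)) hbelow
  rw [← mul_assoc, hprim T (right_mem_Icc.2 hT.1)] at hFT
  exact le_div_of_le_add_mul_of_le (hnn T hT) hc (Real.sqrt_pos.2 (by linarith)) (hineq T hT) hFT

theorem nonlinear_gronwall_bound (c Tstar : ℝ) (hc : 0 < c) (hT : 0 < Tstar)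
    (g : ℝ → ℝ) (hcont : ContinuousOn g (Set.Icc 0 Tstar))
    (hnn : ∀ t ∈ Set.Icc (0:ℝ) Tstar, 0 ≤ g t) (hg0 : 0 < g 0)
    (hineq : ∀ T ∈ Set.Icc (0:ℝ) Tstar, g T ≤ g 0 + (c/2) * g T * ∫ t in (0:ℝ)..T, g t) :
    ∀ T ∈ Set.Icc (0:ℝ) Tstar, c * g 0 * T < 1 →
      g T ≤ g 0 / Real.sqrt (1 - c * g 0 * T) :=
  nonlinear_gronwall_bound_general c Tstar hc g hcont hnn hineq

end KWP
end
end
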